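/- Let G be a group, H a subgroup of G, and N a nilpotent normal subgroup of G. If H · [N,N] = G (i.e., every element of G is a product of an element of H and an element of the commutator subgroup of N), then H = G. -/

import Mathlib

/-!
Write `γₖ` for the lower central series of `N`, computed inside `G`; these are normal in `G`.
If `N ⊆ H γₖ`, expanding a commutator of two elements `h z, h' z'` of `N` (with `z, z' ∈ γₖ`)
shows `⁅N, N⁆ ⊆ H γₖ₊₁`, because `γₖ` commutes with `N` modulo `γₖ₊₁`. Together with
`N ⊆ H ⁅N, N⁆` this gives `N ⊆ H γₖ₊₁`, so by induction `N ⊆ H γₖ` for all `k ≥ 1`.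
Nilpotency makes some `γₖ` trivial, hence `N ≤ H`, and then `G = H ⁅N, N⁆ = H`.
-/

open scoped commutatorElement

namespace Subgroup

variable {G : Type*} [Group G]

theorem commutator_le_sup_of_le_sup {H N C A : Subgroup G} [C.Normal] [A.Normal]
    (hN : N ≤ H ⊔ C) (hCN : C ≤ N) (hCA : ⁅C, N⁆ ≤ A) : ⁅N, N⁆ ≤ H ⊔ A := by
  rw [commutator_le]
  intro a ha b hb
  obtain ⟨h, hh, z, hz, rfl⟩ := mem_sup_of_normal_right.mp (hN ha)
  obtain ⟨h', hh', z', hz', rfl⟩ := mem_sup_of_normal_right.mp (hN hb)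
  have hhN : h ∈ N := by simpa using mul_mem ha (inv_mem (hCN hz))
  have hzb : ⁅z, h' * z'⁆ ∈ A := hCA (commutator_mem_commutator hz hb)
  have hhz' : ⁅h, z'⁆ ∈ A := by
    rw [← commutatorElement_inv]
    exact inv_mem (hCA (commutator_mem_commutator hz' hhN))
  rw [commutatorElement_mul_left_eq_conj_mul h z, commutatorElement_mul_right_eq_mul_conj h h' z']
  have hconj₁ : h * ⁅z, h' * z'⁆ * h⁻¹ ∈ H ⊔ A := mem_sup_right (‹A.Normal›.conj_mem _ hzb h)
  have hconj₂ : h' * ⁅h, z'⁆ * h'⁻¹ ∈ H ⊔ A := mem_sup_right (‹A.Normal›.conj_mem _ hhz' h')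
  have hhh' : ⁅h, h'⁆ ∈ H ⊔ A :=
    mem_sup_left (mul_mem (mul_mem (mul_mem hh hh') (inv_mem hh)) (inv_mem hh'))
  simpa only [mul_assoc] using mul_mem hconj₁ (mul_mem hhh' hconj₂)

theorem le_sup_lowerCentralSeries_of_le_sup_commutator {H N : Subgroup G} [N.Normal]
    (hN : N ≤ H ⊔ ⁅N, N⁆) (k : ℕ) : N ≤ H ⊔ N.lowerCentralSeries (k + 1) := by
  induction k with
  | zero => exact hN
  | succ k ih =>
    have hcomm : ⁅N, N⁆ ≤ H ⊔ N.lowerCentralSeries (k + 2) :=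
      commutator_le_sup_of_le_sup ih (N.lowerCentralSeries_antitone (k + 1).zero_le) le_rfl
    calc N ≤ H ⊔ ⁅N, N⁆ := hN
      _ ≤ H ⊔ N.lowerCentralSeries (k + 2) := sup_le le_sup_left hcomm

theorem le_of_le_sup_commutator_of_isNilpotent {H N : Subgroup G} [N.Normal]
    (hnil : Group.IsNilpotent N) (hN : N ≤ H ⊔ ⁅N, N⁆) : N ≤ H := by
  obtain ⟨k, hk⟩ := (isNilpotent_iff_lowerCentralSeries N).mp hnil
  have hbot : N.lowerCentralSeries (k + 1) = ⊥ :=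
    le_bot_iff.mp (hk ▸ N.lowerCentralSeries_antitone k.le_succ)
  simpa only [hbot, sup_bot_eq] using le_sup_lowerCentralSeries_of_le_sup_commutator hN k

end Subgroup

/-- Kovacic's lemma: if `H` is a subgroup of `G`, `N` a nilpotent normal subgroup,
and every element of `G` is a product of an element of `H` and an element of the
commutator subgroup `⁅N, N⁆`, then `H = G`. -/
theorem stmt0 {G : Type*} [Group G] (H N : Subgroup G) (hN : N.Normal)
    (hnil : Group.IsNilpotent N)
    (hgen : ∀ g : G, ∃ h ∈ H, ∃ n ∈ ⁅N, N⁆, g = h * n) :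
    H = ⊤ := by
  have hsup : ∀ g : G, g ∈ H ⊔ ⁅N, N⁆ := fun g => by
    obtain ⟨h, hh, n, hn, rfl⟩ := hgen g
    exact Subgroup.mul_mem_sup hh hn
  have hNH : N ≤ H :=
    Subgroup.le_of_le_sup_commutator_of_isNilpotent hnil fun g _ => hsup g
  refine eq_top_iff.mpr fun g _ => ?_
  obtain ⟨h, hh, n, hn, rfl⟩ := hgen g
  exact H.mul_mem hh (hNH (Subgroup.commutator_le_left N N hn))
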